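/- arXiv:2011.03580 — 2 statements merged into one kernel-verified Lean document; each statement's English description precedes it below -/
import Mathlib

section
/- Let δ₁ > 0, let φ : ℝ² → ℝ be twice continuously differentiable at a point x ∈ ℝ², and let r ∈ ℝ. Define ψ : ℝ² → ℝ by ψ(y) = exp(−φ(y)/δ₁) − 1. Then φ satisfies −δ₁ Δφ(x) + ‖∇φ(x)‖² = r if and only if ψ satisfies −Δψ(x) + (r/δ₁²) ψ(x) = −r/δ₁², where Δ denotes the Laplacian (the sum of the second partial derivatives, i.e. the trace of the second derivative) and ∇φ the gradient. -/
/-- The Laplacian on `ℝ²`: the trace of the second derivative, i.e. the sum of the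
second partial derivatives. -/
noncomputable def planarLaplacian (f : EuclideanSpace ℝ (Fin 2) → ℝ)
    (x : EuclideanSpace ℝ (Fin 2)) : ℝ :=
  ∑ i : Fin 2,
    iteratedFDeriv ℝ 2 f x ![EuclideanSpace.single i 1, EuclideanSpace.single i 1]

/-!
By the chain rule, `Δ(g ∘ φ) = g'(φ) Δφ + g''(φ) ‖∇φ‖²`. For `g t = e^{-t/δ₁} - 1` this gives
`-Δψ + (r/δ₁²) ψ + r/δ₁² = -(e^{-φ/δ₁}/δ₁²) (-δ₁ Δφ + ‖∇φ‖² - r)`, and the factor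
`e^{-φ/δ₁}/δ₁²` never vanishes.
-/

open Filter Topology

section SecondDerivativeComp

variable {E : Type*} [NormedAddCommGroup E] [NormedSpace ℝ E]
  {φ : E → ℝ} {g g' : ℝ → ℝ} {g'' : ℝ} {x : E}

theorem fderiv_fderiv_comp_apply (hg : ∀ᶠ t in 𝓝 (φ x), HasDerivAt g (g' t) t)
    (hg' : HasDerivAt g' g'' (φ x)) (hφ : ∀ᶠ y in 𝓝 x, DifferentiableAt ℝ φ y)
    (hφ' : DifferentiableAt ℝ (fderiv ℝ φ) x) (v w : E) :
    fderiv ℝ (fderiv ℝ (fun y => g (φ y))) x v w =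
      g' (φ x) * fderiv ℝ (fderiv ℝ φ) x v w + g'' * fderiv ℝ φ x v * fderiv ℝ φ x w := by
  have hφx : DifferentiableAt ℝ φ x := hφ.self_of_nhds
  have hfderiv : fderiv ℝ (fun y => g (φ y)) =ᶠ[𝓝 x] fun y => g' (φ y) • fderiv ℝ φ y := by
    filter_upwards [hφ, hφx.continuousAt.eventually hg] with y hφy hgy
    exact (hgy.comp_hasFDerivAt y hφy.hasFDerivAt).fderiv
  have hcoeff : HasFDerivAt (fun y => g' (φ y)) (g'' • fderiv ℝ φ x) x :=
    hg'.comp_hasFDerivAt x hφx.hasFDerivAt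
  rw [hfderiv.fderiv_eq, (hcoeff.fun_smul hφ'.hasFDerivAt).fderiv]
  simp only [add_apply, smul_apply, ContinuousLinearMap.smulRight_apply, smul_eq_mul]

end SecondDerivativeComp

theorem EuclideanSpace.norm_gradient_sq_eq_sum {ι : Type*} [Fintype ι] [DecidableEq ι]
    (φ : EuclideanSpace ℝ ι → ℝ) (x : EuclideanSpace ℝ ι) :
    ‖gradient φ x‖ ^ 2 = ∑ i, fderiv ℝ φ x (EuclideanSpace.single i 1) ^ 2 := by
  simp [EuclideanSpace.real_norm_sq_eq, ← inner_gradient_left, EuclideanSpace.inner_single_right]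

theorem planarLaplacian_comp {φ : EuclideanSpace ℝ (Fin 2) → ℝ} {g g' : ℝ → ℝ} {g'' : ℝ}
    {x : EuclideanSpace ℝ (Fin 2)}
    (hg : ∀ᶠ t in 𝓝 (φ x), HasDerivAt g (g' t) t) (hg' : HasDerivAt g' g'' (φ x))
    (hφ : ContDiffAt ℝ 2 φ x) :
    planarLaplacian (fun y => g (φ y)) x =
      g' (φ x) * planarLaplacian φ x + g'' * ‖gradient φ x‖ ^ 2 := by
  have hφd : ∀ᶠ y in 𝓝 x, DifferentiableAt ℝ φ y := by
    filter_upwards [hφ.eventually (by simp)] with y hy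
    exact hy.differentiableAt two_ne_zero
  have hφ' : DifferentiableAt ℝ (fderiv ℝ φ) x :=
    (hφ.fderiv_right (m := 1) le_rfl).differentiableAt one_ne_zero
  simp only [planarLaplacian, iteratedFDeriv_two_apply, Matrix.cons_val_zero, Matrix.cons_val_one,
    fderiv_fderiv_comp_apply hg hg' hφd hφ', EuclideanSpace.norm_gradient_sq_eq_sum, Finset.mul_sum,
    ← Finset.sum_add_distrib]
  simp only [sq, mul_assoc]

/-- The exponential (Cole–Hopf type) transformation `ψ = e^{−φ/δ₁} − 1` converts the
regularized Eikonal equation `−δ₁Δφ + |∇φ|² = r` into `−Δψ + (r/δ₁²)ψ = −r/δ₁²`. -/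
theorem stmt_1 (δ₁ : ℝ) (hδ₁ : 0 < δ₁) (r : ℝ)
    (φ : EuclideanSpace ℝ (Fin 2) → ℝ) (x : EuclideanSpace ℝ (Fin 2))
    (hφ : ContDiffAt ℝ 2 φ x) :
    (-δ₁ * planarLaplacian φ x + ‖gradient φ x‖ ^ 2 = r) ↔
      (-(planarLaplacian (fun y => Real.exp (-φ y / δ₁) - 1) x)
          + (r / δ₁ ^ 2) * (Real.exp (-φ x / δ₁) - 1) = -(r / δ₁ ^ 2)) := by
  have hψ' : ∀ t, HasDerivAt (fun t => Real.exp (-t / δ₁) - 1) (-Real.exp (-t / δ₁) / δ₁) t :=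
    fun t => by simpa [neg_div, div_eq_mul_inv] using
      (((hasDerivAt_id t).neg.div_const δ₁).exp).sub_const 1
  have hψ'' : HasDerivAt (fun t => -Real.exp (-t / δ₁) / δ₁)
      (Real.exp (-φ x / δ₁) / δ₁ ^ 2) (φ x) := by
    simpa [neg_div, div_eq_mul_inv, sq, mul_assoc] using
      (((hasDerivAt_id (φ x)).neg.div_const δ₁).exp).neg.div_const δ₁
  rw [planarLaplacian_comp (Eventually.of_forall hψ') hψ'' hφ]
  set E := Real.exp (-φ x / δ₁)
  have hfactor : -(-E / δ₁ * planarLaplacian φ x + E / δ₁ ^ 2 * ‖gradient φ x‖ ^ 2)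
      + r / δ₁ ^ 2 * (E - 1) + r / δ₁ ^ 2
      = -(E / δ₁ ^ 2 * (-δ₁ * planarLaplacian φ x + ‖gradient φ x‖ ^ 2 - r)) := by
    field_simp
    ring
  have hE : E / δ₁ ^ 2 ≠ 0 := by positivity
  rw [eq_neg_iff_add_eq_zero, hfactor, neg_eq_zero, mul_eq_zero, or_iff_right hE, sub_eq_zero]
end

section
/- Let T > 0, let f : ℝ → ℝ be Lipschitz with constant L_f, and let u : [0,T] → ℝ² be measurable with |u(t)| ≤ 1 for a.e. t. Let ρ₁, ρ₂ : [0,T] × ℝ² → ℝ be bounded measurable functions such that for a.e. t ∈ [0,T] the map x ↦ ρ₁(t,x) is Lipschitz with constant C(t), where C : [0,T] → [0,∞) is integrable. Let x₁, x₂ : [0,T] → ℝ² satisfy the integral equations xᵢ(t) = x₀ + ∫₀ᵗ f(ρᵢ(s, xᵢ(s))) u(s) ds for all t ∈ [0,T], with the same initial value x₀ ∈ ℝ². Then for every t ∈ [0,T], |x₁(t) − x₂(t)| ≤ L_f · t · sup_{(s,y) ∈ [0,T]×ℝ²} |ρ₁(s,y) − ρ₂(s,y)| · exp( L_f ∫₀ᵗ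 C(s) ds ). -/
/-!
Splitting the density difference through `ρ₁ s (x₂ s)`, the Lipschitz bounds of `f` and `ρ₁ s`
bound the integrand of `x₁ - x₂` by `L_f * (C s * ‖x₁ s - x₂ s‖ + D)`, where `D` is the
sup-distance of the densities. Hence `φ = ‖x₁ - x₂‖` satisfies `φ ≤ L_f D t + ∫₀ˢ L_f C φ` on
`[0, t]`, and Gronwall's inequality gives the estimate. Since the kernel `L_f C` is only
integrable, Gronwall is proved with the integrating factor `exp (-∫₀ˢ k)`, which is merely
absolutely continuous.
-/

open MeasureTheory Set Filter

theorem LipschitzOnWith.comp_absolutelyContinuousOnInterval {X Y : Type*}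
    [PseudoMetricSpace X] [PseudoMetricSpace Y] {g : X → Y} {K : NNReal} {s : Set X}
    {f : ℝ → X} {a b : ℝ} (hg : LipschitzOnWith K g s) (hf : AbsolutelyContinuousOnInterval f a b)
    (hfs : MapsTo f (uIcc a b) s) :
    AbsolutelyContinuousOnInterval (g ∘ f) a b := by
  unfold AbsolutelyContinuousOnInterval at hf ⊢
  refine squeeze_zero' (Eventually.of_forall fun E => Finset.sum_nonneg fun i _ => dist_nonneg)
    ?_ (by simpa using hf.const_mul (K : ℝ))
  filter_upwards [mem_inf_of_right (mem_principal_self _)] with E hE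
  rw [Finset.mul_sum]
  exact Finset.sum_le_sum fun i hi =>
    hg.dist_le_mul _ (hfs (hE.1 i hi).1) _ (hfs (hE.1 i hi).2)

theorem AbsolutelyContinuousOnInterval.le_of_ae_deriv_nonpos {h : ℝ → ℝ} {a b : ℝ}
    (hab : a ≤ b) (hh : AbsolutelyContinuousOnInterval h a b)
    (hd : ∀ᵐ x, x ∈ Icc a b → deriv h x ≤ 0) : h b ≤ h a := by
  have hint : ∫ x in a..b, deriv h x ≤ 0 := by
    have := intervalIntegral.integral_nonneg_of_ae_restrict hab
      (f := fun x => -deriv h x) (μ := volume) ?_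
    · rwa [intervalIntegral.integral_neg, neg_nonneg] at this
    · filter_upwards [ae_restrict_of_ae hd, ae_restrict_mem measurableSet_Icc] with x hx hmem
      simpa using hx hmem
  linarith [hh.integral_deriv_eq_sub]

theorem le_mul_exp_integral_of_le_add_integral_mul {k φ : ℝ → ℝ} {B t : ℝ} (ht : 0 ≤ t)
    (hk : IntegrableOn k (Icc 0 t)) (hk_nonneg : ∀ s ∈ Icc 0 t, 0 ≤ k s)
    (hφ_cont : ContinuousOn φ (Icc 0 t))
    (hφ : ∀ s ∈ Icc 0 t, φ s ≤ B + ∫ r in 0..s, k r * φ r) :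
    φ t ≤ B * Real.exp (∫ s in 0..t, k s) := by
  have hkφ : IntervalIntegrable (fun s => k s * φ s) volume 0 t :=
    (intervalIntegrable_iff_integrableOn_Icc_of_le ht).2
      (hk.mul_continuousOn hφ_cont isCompact_Icc)
  replace hk : IntervalIntegrable k volume 0 t :=
    (intervalIntegrable_iff_integrableOn_Icc_of_le ht).2 hk
  set K : ℝ → ℝ := fun s => ∫ r in 0..s, k r
  set ψ : ℝ → ℝ := fun s => ∫ r in 0..s, k r * φ r
  have hK : AbsolutelyContinuousOnInterval K 0 t :=
    hk.absolutelyContinuousOnInterval_intervalIntegral left_mem_uIcc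
  have hψ : AbsolutelyContinuousOnInterval ψ 0 t :=
    hkφ.absolutelyContinuousOnInterval_intervalIntegral left_mem_uIcc
  have hexp : AbsolutelyContinuousOnInterval (fun s => Real.exp (-K s)) 0 t := by
    obtain ⟨L, hL⟩ := Real.contDiff_exp.locallyLipschitz.locallyLipschitzOn
      |>.exists_lipschitzOnWith_of_compact (isCompact_uIcc.image_of_continuousOn
        hK.neg.continuousOn)
    exact hL.comp_absolutelyContinuousOnInterval hK.neg (mapsTo_image _ _)
  -- `exp (-K) * (ψ + B)` is nonincreasing: its derivative is `exp (-K) * k * (φ - ψ - B) ≤ 0`.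
  have hdecr : Real.exp (-K t) * (ψ t + B) ≤ Real.exp (-K 0) * (ψ 0 + B) := by
    refine AbsolutelyContinuousOnInterval.le_of_ae_deriv_nonpos ht
      (hexp.mul (hψ.add (LipschitzWith.const B).lipschitzOnWith.absolutelyContinuousOnInterval)) ?_
    filter_upwards [hk.ae_hasDerivAt_integral, hkφ.ae_hasDerivAt_integral] with x hKx hψx hx
    have hx' : x ∈ uIcc 0 t := by rwa [uIcc_of_le ht]
    have hd : HasDerivAt ((fun s => Real.exp (-K s)) * (ψ + fun _ => B))
        (Real.exp (-K x) * -k x * (ψ x + B) + Real.exp (-K x) * (k x * φ x)) x :=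
      ((hKx hx' 0 left_mem_uIcc).neg.exp).mul ((hψx hx' 0 left_mem_uIcc).add_const B)
    rw [hd.deriv]
    have : k x * (φ x - (ψ x + B)) ≤ 0 :=
      mul_nonpos_of_nonneg_of_nonpos (hk_nonneg x hx) (by linarith [hφ x hx])
    nlinarith [Real.exp_pos (-K x)]
  have hψt : ψ t + B ≤ B * Real.exp (K t) := by
    simpa [K, ψ, Real.exp_neg, inv_mul_le_iff₀ (Real.exp_pos _), mul_comm] using hdecr
  linarith [hφ t ⟨ht, le_rfl⟩]

theorem le_ciSup_ciSup_of_forall_le {ι κ : Type*} [Nonempty κ] {F : ι → κ → ℝ} {M : ℝ}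
    (hM : ∀ i j, F i j ≤ M) (i : ι) (j : κ) : F i j ≤ ⨆ i, ⨆ j, F i j :=
  (le_ciSup ⟨M, forall_mem_range.2 (hM i)⟩ j).trans
    (le_ciSup ⟨M, forall_mem_range.2 fun i => ciSup_le (hM i)⟩ i)

section IntegralEquation

variable {E : Type*} [NormedAddCommGroup E] [NormedSpace ℝ E]

theorem continuousOn_of_eq_add_integral {x F : ℝ → E} {x₀ : E} {T : ℝ}
    (hF : IntervalIntegrable F volume 0 T) (hx : ∀ t ∈ Icc 0 T, x t = x₀ + ∫ s in 0..t, F s) :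
    ContinuousOn x (Icc 0 T) :=
  (continuousOn_const.add ((intervalIntegral.continuousOn_primitive_interval' hF
    left_mem_uIcc).mono Icc_subset_uIcc)).congr hx

theorem norm_sub_le_integral_of_eq_add_integral {x₁ x₂ F₁ F₂ : ℝ → E} {x₀ : E} {g : ℝ → ℝ}
    {t : ℝ} (ht : 0 ≤ t) (hF₁ : IntervalIntegrable F₁ volume 0 t)
    (hF₂ : IntervalIntegrable F₂ volume 0 t) (hg : IntervalIntegrable g volume 0 t)
    (hx₁ : x₁ t = x₀ + ∫ s in 0..t, F₁ s) (hx₂ : x₂ t = x₀ + ∫ s in 0..t, F₂ s)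
    (hF : ∀ᵐ s, s ∈ Ioc 0 t → ‖F₁ s - F₂ s‖ ≤ g s) :
    ‖x₁ t - x₂ t‖ ≤ ∫ s in 0..t, g s := by
  rw [hx₁, hx₂, add_sub_add_left_eq_sub, ← intervalIntegral.integral_sub hF₁ hF₂]
  exact intervalIntegral.norm_integral_le_of_norm_le ht hF hg

end IntegralEquation

theorem norm_smul_sub_smul_le {E V : Type*} [SeminormedAddCommGroup E] [SeminormedAddCommGroup V]
    [NormedSpace ℝ V] {f : ℝ → ℝ} {g₁ g₂ : E → ℝ} {L c D : ℝ} (hL : 0 ≤ L)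
    (hf : ∀ a b, |f a - f b| ≤ L * |a - b|) (hg₁ : ∀ y z, |g₁ y - g₁ z| ≤ c * ‖y - z‖)
    {v : V} (hv : ‖v‖ ≤ 1) {y z : E} (hD : |g₁ z - g₂ z| ≤ D) :
    ‖f (g₁ y) • v - f (g₂ z) • v‖ ≤ L * (c * ‖y - z‖ + D) := by
  have hg : |g₁ y - g₂ z| ≤ c * ‖y - z‖ + D :=
    (abs_sub_le _ _ _).trans (add_le_add (hg₁ y z) hD)
  calc ‖f (g₁ y) • v - f (g₂ z) • v‖ = |f (g₁ y) - f (g₂ z)| * ‖v‖ := by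
        rw [← sub_smul, norm_smul, Real.norm_eq_abs]
    _ ≤ |f (g₁ y) - f (g₂ z)| := mul_le_of_le_one_right (abs_nonneg _) hv
    _ ≤ L * (c * ‖y - z‖ + D) := (hf _ _).trans (mul_le_mul_of_nonneg_left hg hL)

section Trajectories

variable {E : Type*} [NormedAddCommGroup E] [NormedSpace ℝ E] {f : ℝ → ℝ} {L : ℝ}
  {u : ℝ → E} {ρ₁ ρ₂ : ℝ → E → ℝ} {C : ℝ → ℝ} {D T : ℝ} {x₀ : E} {x₁ x₂ : ℝ → E}

theorem norm_sub_le_mul_add_integral_mul_norm_sub (hL : 0 ≤ L)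
    (hf : ∀ a b, |f a - f b| ≤ L * |a - b|) (hu : ∀ᵐ s ∂(volume.restrict (Icc 0 T)), ‖u s‖ ≤ 1)
    (hC : IntegrableOn C (Icc 0 T))
    (hρ₁ : ∀ᵐ s ∂(volume.restrict (Icc 0 T)), ∀ y z, |ρ₁ s y - ρ₁ s z| ≤ C s * ‖y - z‖)
    (hD : ∀ s ∈ Icc 0 T, ∀ y, |ρ₁ s y - ρ₂ s y| ≤ D)
    (hx₁_int : IntervalIntegrable (fun s => f (ρ₁ s (x₁ s)) • u s) volume 0 T)
    (hx₂_int : IntervalIntegrable (fun s => f (ρ₂ s (x₂ s)) • u s) volume 0 T)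
    (hx₁ : ∀ t ∈ Icc 0 T, x₁ t = x₀ + ∫ s in 0..t, f (ρ₁ s (x₁ s)) • u s)
    (hx₂ : ∀ t ∈ Icc 0 T, x₂ t = x₀ + ∫ s in 0..t, f (ρ₂ s (x₂ s)) • u s) {t : ℝ}
    (ht : t ∈ Icc 0 T) :
    ‖x₁ t - x₂ t‖ ≤ L * D * t + ∫ s in 0..t, L * C s * ‖x₁ s - x₂ s‖ := by
  have htT : Icc 0 t ⊆ Icc 0 T := Icc_subset_Icc_right ht.2
  have hsub : uIcc 0 t ⊆ uIcc 0 T := uIcc_subset_uIcc_left (Icc_subset_uIcc ht)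
  have hkφ : IntervalIntegrable (fun s => L * C s * ‖x₁ s - x₂ s‖) volume 0 t :=
    (intervalIntegrable_iff_integrableOn_Icc_of_le ht.1).2 <|
      IntegrableOn.mul_continuousOn ((hC.mono_set htT).const_mul L)
        (((continuousOn_of_eq_add_integral hx₁_int hx₁).sub
          (continuousOn_of_eq_add_integral hx₂_int hx₂)).norm.mono htT) isCompact_Icc
  have hbound : ∀ᵐ s, s ∈ Ioc 0 t →
      ‖f (ρ₁ s (x₁ s)) • u s - f (ρ₂ s (x₂ s)) • u s‖ ≤ L * C s * ‖x₁ s - x₂ s‖ + L * D := by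
    filter_upwards [(ae_restrict_iff' measurableSet_Icc).1 hu,
      (ae_restrict_iff' measurableSet_Icc).1 hρ₁] with s hus hlip hs
    have hs' : s ∈ Icc 0 T := htT (Ioc_subset_Icc_self hs)
    exact (norm_smul_sub_smul_le hL hf (hlip hs') (hus hs') (hD s hs' (x₂ s))).trans_eq
      (by ring)
  calc ‖x₁ t - x₂ t‖ ≤ ∫ s in 0..t, (L * C s * ‖x₁ s - x₂ s‖ + L * D) :=
        norm_sub_le_integral_of_eq_add_integral ht.1 (hx₁_int.mono_set hsub)
          (hx₂_int.mono_set hsub) (hkφ.add intervalIntegrable_const) (hx₁ t ht) (hx₂ t ht) hbound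
    _ = L * D * t + ∫ s in 0..t, L * C s * ‖x₁ s - x₂ s‖ := by
        rw [intervalIntegral.integral_add hkφ intervalIntegrable_const,
          intervalIntegral.integral_const, smul_eq_mul]
        ring

end Trajectories

theorem stmt_2_general (T : ℝ) (L_f : ℝ) (hLf : 0 ≤ L_f)
    (f : ℝ → ℝ) (hf : ∀ a b : ℝ, |f a - f b| ≤ L_f * |a - b|)
    (u : ℝ → EuclideanSpace ℝ (Fin 2))
    (hu : ∀ᵐ t ∂(volume.restrict (Icc (0:ℝ) T)), ‖u t‖ ≤ 1)
    (ρ₁ ρ₂ : ℝ → EuclideanSpace ℝ (Fin 2) → ℝ)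
    (M₁ M₂ : ℝ) (hρ₁_bdd : ∀ t y, |ρ₁ t y| ≤ M₁) (hρ₂_bdd : ∀ t y, |ρ₂ t y| ≤ M₂)
    (C : ℝ → ℝ) (hC_nonneg : ∀ t, 0 ≤ C t) (hC_int : IntegrableOn C (Icc 0 T))
    (hρ₁_lip : ∀ᵐ t ∂(volume.restrict (Icc (0:ℝ) T)),
      ∀ y z : EuclideanSpace ℝ (Fin 2), |ρ₁ t y - ρ₁ t z| ≤ C t * ‖y - z‖)
    (x₀ : EuclideanSpace ℝ (Fin 2)) (x₁ x₂ : ℝ → EuclideanSpace ℝ (Fin 2))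
    (hx₁_int : IntervalIntegrable (fun s => f (ρ₁ s (x₁ s)) • u s) volume 0 T)
    (hx₂_int : IntervalIntegrable (fun s => f (ρ₂ s (x₂ s)) • u s) volume 0 T)
    (hx₁ : ∀ t ∈ Icc (0:ℝ) T, x₁ t = x₀ + ∫ s in (0:ℝ)..t, f (ρ₁ s (x₁ s)) • u s)
    (hx₂ : ∀ t ∈ Icc (0:ℝ) T, x₂ t = x₀ + ∫ s in (0:ℝ)..t, f (ρ₂ s (x₂ s)) • u s) :
    ∀ t ∈ Icc (0:ℝ) T,
      ‖x₁ t - x₂ t‖ ≤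
        L_f * t * (⨆ s : Icc (0:ℝ) T, ⨆ y : EuclideanSpace ℝ (Fin 2),
            |ρ₁ (s : ℝ) y - ρ₂ (s : ℝ) y|) *
          Real.exp (L_f * ∫ s in (0:ℝ)..t, C s) := by
  intro t ht
  set D := ⨆ s : Icc (0:ℝ) T, ⨆ y : EuclideanSpace ℝ (Fin 2), |ρ₁ (s : ℝ) y - ρ₂ (s : ℝ) y|
  have hD : ∀ s ∈ Icc 0 T, ∀ y, |ρ₁ s y - ρ₂ s y| ≤ D := fun s hs y =>
    le_ciSup_ciSup_of_forall_le (F := fun (s : Icc (0:ℝ) T) y => |ρ₁ s y - ρ₂ s y|)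
      (fun s y => (abs_sub _ _).trans (add_le_add (hρ₁_bdd s y) (hρ₂_bdd s y))) ⟨s, hs⟩ y
  have hLD : 0 ≤ L_f * D := mul_nonneg hLf ((abs_nonneg _).trans (hD t ht 0))
  have htT : Icc 0 t ⊆ Icc 0 T := Icc_subset_Icc_right ht.2
  have hφ : ContinuousOn (fun s => ‖x₁ s - x₂ s‖) (Icc 0 t) :=
    ((continuousOn_of_eq_add_integral hx₁_int hx₁).sub
      (continuousOn_of_eq_add_integral hx₂_int hx₂)).norm.mono htT
  have hstep : ∀ s ∈ Icc 0 t,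
      ‖x₁ s - x₂ s‖ ≤ L_f * D * t + ∫ r in 0..s, L_f * C r * ‖x₁ r - x₂ r‖ := fun s hs =>
    (norm_sub_le_mul_add_integral_mul_norm_sub hLf hf hu hC_int hρ₁_lip hD hx₁_int hx₂_int
      hx₁ hx₂ (htT hs)).trans (by gcongr; exact hs.2)
  calc ‖x₁ t - x₂ t‖ ≤ L_f * D * t * Real.exp (∫ s in 0..t, L_f * C s) :=
        le_mul_exp_integral_of_le_add_integral_mul ht.1 ((hC_int.mono_set htT).const_mul L_f)
          (fun s _ => mul_nonneg hLf (hC_nonneg s)) hφ hstep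
    _ = _ := by rw [intervalIntegral.integral_const_mul]; ring

/-- Stability of agent trajectories with respect to the driving density field
(estimate (3.5) of Lemma 3.5). -/
theorem stmt_2 (T : ℝ) (hT : 0 < T) (L_f : ℝ) (hLf : 0 ≤ L_f)
    (f : ℝ → ℝ) (hf : ∀ a b : ℝ, |f a - f b| ≤ L_f * |a - b|)
    (u : ℝ → EuclideanSpace ℝ (Fin 2)) (hu_meas : Measurable u)
    (hu : ∀ᵐ t ∂(volume.restrict (Icc (0:ℝ) T)), ‖u t‖ ≤ 1)
    (ρ₁ ρ₂ : ℝ → EuclideanSpace ℝ (Fin 2) → ℝ)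
    (hρ₁_meas : Measurable (Function.uncurry ρ₁))
    (hρ₂_meas : Measurable (Function.uncurry ρ₂))
    (M₁ M₂ : ℝ) (hρ₁_bdd : ∀ t y, |ρ₁ t y| ≤ M₁) (hρ₂_bdd : ∀ t y, |ρ₂ t y| ≤ M₂)
    (C : ℝ → ℝ) (hC_nonneg : ∀ t, 0 ≤ C t) (hC_int : IntegrableOn C (Icc 0 T))
    (hρ₁_lip : ∀ᵐ t ∂(volume.restrict (Icc (0:ℝ) T)),
      ∀ y z : EuclideanSpace ℝ (Fin 2), |ρ₁ t y - ρ₁ t z| ≤ C t * ‖y - z‖)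
    (x₀ : EuclideanSpace ℝ (Fin 2)) (x₁ x₂ : ℝ → EuclideanSpace ℝ (Fin 2))
    (hx₁_int : IntervalIntegrable (fun s => f (ρ₁ s (x₁ s)) • u s) volume 0 T)
    (hx₂_int : IntervalIntegrable (fun s => f (ρ₂ s (x₂ s)) • u s) volume 0 T)
    (hx₁ : ∀ t ∈ Icc (0:ℝ) T, x₁ t = x₀ + ∫ s in (0:ℝ)..t, f (ρ₁ s (x₁ s)) • u s)
    (hx₂ : ∀ t ∈ Icc (0:ℝ) T, x₂ t = x₀ + ∫ s in (0:ℝ)..t, f (ρ₂ s (x₂ s)) • u s) :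
    ∀ t ∈ Icc (0:ℝ) T,
      ‖x₁ t - x₂ t‖ ≤
        L_f * t * (⨆ s : Icc (0:ℝ) T, ⨆ y : EuclideanSpace ℝ (Fin 2),
            |ρ₁ (s : ℝ) y - ρ₂ (s : ℝ) y|) *
          Real.exp (L_f * ∫ s in (0:ℝ)..t, C s) :=
  stmt_2_general T L_f hLf f hf u hu ρ₁ ρ₂ M₁ M₂ hρ₁_bdd hρ₂_bdd C hC_nonneg hC_int hρ₁_lip x₀ x₁ x₂
    hx₁_int hx₂_int hx₁ hx₂
end
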